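/- arXiv:1103.5415 — 3 statements merged into one kernel-verified Lean document; each statement's English description precedes it below -/
import Mathlib

section
/- Let K be a field, n ≥ 3, and let Θ be a symmetric matching on Z(n−1) such that Θ(x_{i−1}) = x_i (hence also Θ(y_{i−1}) = y_i) for some 2 ≤ i ≤ n−1, so that the control equations of Θ include u_{i−1}+u_i = u_i+u_{i+1} and v_{i−1}+v_i = v_i+v_{i+1}. Let Θ′ be the symmetric matching on Z(n−3) obtained by restricting Θ to Z(n−1)∖{x_{i−1},x_i,y_{i−1},y_i} and relabeling indices via the order-preserving bijection {1,…,n−1}∖{i−1,i} → {1,…,n−3}, with S(Θ′) ⊆ K[A_1,…,A_{n−2},B_1,…,B_{n−2}]. Then A_i ∈ S(Θ), B_i ∈ S(Θ), and S(Θ) is isomorphic as a K-algebra to the polynomial ring in two variables S(Θ′)[T_1,T_2] over S(Θ′). -/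
open MvPolynomial

/-- The variable `A_i` (1-indexed `i`; here `i : Fin n` is the 0-indexed position). -/
noncomputable def Av (K : Type*) [Field K] (n : ℕ) (i : Fin n) :
    MvPolynomial (Fin n ⊕ Fin n) K := X (Sum.inl i)

/-- The variable `B_i` (1-indexed `i`; here `i : Fin n` is the 0-indexed position). -/
noncomputable def Bv (K : Type*) [Field K] (n : ℕ) (i : Fin n) :
    MvPolynomial (Fin n ⊕ Fin n) K := X (Sum.inr i)

/-- The monomial `A_1^{u 1} ⋯ A_n^{u n} · B_1^{v 1} ⋯ B_n^{v n}` (1-indexed exponents). -/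
noncomputable def monAB (K : Type*) [Field K] (n : ℕ) (u v : ℕ → ℕ) :
    MvPolynomial (Fin n ⊕ Fin n) K :=
  (∏ i : Fin n, X (Sum.inl i) ^ u ((i : ℕ) + 1)) *
    ∏ i : Fin n, X (Sum.inr i) ^ v ((i : ℕ) + 1)

/-- The `K`-span of the monomials whose (1-indexed) exponent vectors satisfy the
control equations `E`; this is the ring `S(Θ)` when `E` is the system of control
equations of a matching `Θ`. -/
noncomputable def controlSpan (K : Type*) [Field K] (n : ℕ)
    (E : (ℕ → ℕ) → (ℕ → ℕ) → Prop) :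
    Submodule K (MvPolynomial (Fin n ⊕ Fin n) K) :=
  Submodule.span K {p | ∃ u v : ℕ → ℕ, E u v ∧ p = monAB K n u v}

/-- The control equations of a symmetric matching `Θ` on
`Z(n-1) = {x_1,…,x_{n-1}, y_1,…,y_{n-1}}` (here `x_k ↔ Sum.inl ⟨k-1⟩`,
`y_k ↔ Sum.inr ⟨k-1⟩`), on 1-indexed exponent vectors `u, v`. -/
def ctrlEq (n : ℕ) (Θ : Fin (n - 1) ⊕ Fin (n - 1) → Fin (n - 1) ⊕ Fin (n - 1))
    (u v : ℕ → ℕ) : Prop :=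
  ∀ i j : Fin (n - 1),
    (Θ (Sum.inl i) = Sum.inr j →
      u ((i : ℕ) + 1) + u ((i : ℕ) + 2) = v ((j : ℕ) + 1) + v ((j : ℕ) + 2) ∧
      u ((j : ℕ) + 1) + u ((j : ℕ) + 2) = v ((i : ℕ) + 1) + v ((i : ℕ) + 2)) ∧
    (Θ (Sum.inl i) = Sum.inl j →
      u ((i : ℕ) + 1) + u ((i : ℕ) + 2) = u ((j : ℕ) + 1) + u ((j : ℕ) + 2) ∧
      v ((i : ℕ) + 1) + v ((i : ℕ) + 2) = v ((j : ℕ) + 1) + v ((j : ℕ) + 2))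

/-- The order-preserving relabeling `{1,…,n-3} → {1,…,n-1} ∖ {i-1, i}` (0-indexed):
`j ↦ j` for `j < i - 2` and `j ↦ j + 2` otherwise. -/
def embF (n i : ℕ) (j : Fin (n - 3)) : Fin (n - 1) :=
  ⟨if (j : ℕ) < i - 2 then (j : ℕ) else (j : ℕ) + 2, by
    have := j.isLt; split <;> omega⟩

/-!
The control equation of the pair `x_{i-1} ↔ x_i` reads `u_{i-1} = u_{i+1}`, `v_{i-1} = v_{i+1}`.
Since `Θ` permutes `x_{i-1}, x_i, y_{i-1}, y_i` among themselves, every other control equation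
compares sums `u_k + u_{k+1}`, `v_k + v_{k+1}` over the remaining pairs, and once `u_{i+1}` is
replaced by `u_{i-1}` (and `v_{i+1}` by `v_{i-1}`) these are exactly the control equations of `Θ'`
for the exponent vectors with the entries at `i, i + 1` deleted. So the monomials of `S(Θ)` are
the products `m A_i^a B_i^b`, where `m` is the image of a monomial of `S(Θ')` under the
substitution `A'_{i-1} ↦ A_{i-1} A_{i+1}`, `B'_{i-1} ↦ B_{i-1} B_{i+1}` (the other variables being
relabelled): `S(Θ)` is the image of `S(Θ')[T_1, T_2] → S`, `T_1 ↦ A_i`, `T_2 ↦ B_i`. This map is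
injective, as it has a left inverse sending `A_i ↦ T_1`, `B_i ↦ T_2` and `A_{i+1}, B_{i+1} ↦ 1`.
-/

section Monomials

variable {K : Type*} [Field K] {n : ℕ}

theorem monAB_add (u v u' v' : ℕ → ℕ) :
    monAB K n (u + u') (v + v') = monAB K n u v * monAB K n u' v' := by
  simp only [monAB, Pi.add_apply, pow_add, Finset.prod_mul_distrib]
  ring

theorem monAB_zero : monAB K n 0 0 = 1 := by
  simp [monAB]

theorem monAB_single_left (j : Fin n) (a : ℕ) :
    monAB K n (Pi.single ((j : ℕ) + 1) a) 0 = X (Sum.inl j) ^ a := by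
  simp [monAB, Pi.single_apply, Fin.val_inj]

theorem monAB_single_right (j : Fin n) (a : ℕ) :
    monAB K n 0 (Pi.single ((j : ℕ) + 1) a) = X (Sum.inr j) ^ a := by
  simp [monAB, Pi.single_apply, Fin.val_inj]

variable (K n) (E : (ℕ → ℕ) → (ℕ → ℕ) → Prop) (h0 : E 0 0)
  (hadd : ∀ {u v u' v'}, E u v → E u' v' → E (u + u') (v + v'))

noncomputable def controlMonomials : Submonoid (MvPolynomial (Fin n ⊕ Fin n) K) where
  carrier := {p | ∃ u v, E u v ∧ p = monAB K n u v}
  one_mem' := ⟨0, 0, h0, monAB_zero.symm⟩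
  mul_mem' := by
    rintro _ _ ⟨u, v, huv, rfl⟩ ⟨u', v', huv', rfl⟩
    exact ⟨u + u', v + v', hadd huv huv', (monAB_add u v u' v').symm⟩

noncomputable def controlSubalgebra : Subalgebra K (MvPolynomial (Fin n ⊕ Fin n) K) :=
  Algebra.adjoin K (controlMonomials K n E h0 hadd)

theorem coe_controlSubalgebra :
    (controlSubalgebra K n E h0 hadd : Set (MvPolynomial (Fin n ⊕ Fin n) K)) =
      controlSpan K n E := by
  rw [← Subalgebra.coe_toSubmodule, controlSubalgebra, Algebra.adjoin_eq_span,
    Submonoid.closure_eq]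
  rfl

end Monomials

section ControlEquations

/-- At `y_k` the two sums are swapped, so that `ctrlEq` says that `pairSum u v` is constant
along `Θ` (`ctrlEq_iff_pairSum`). -/
def pairSum {m : ℕ} (u v : ℕ → ℕ) : Fin m ⊕ Fin m → ℕ × ℕ :=
  Sum.elim (fun k => (u (k + 1) + u (k + 2), v (k + 1) + v (k + 2)))
    fun k => (v (k + 1) + v (k + 2), u (k + 1) + u (k + 2))

theorem pairSum_add {m : ℕ} (u v u' v' : ℕ → ℕ) (z : Fin m ⊕ Fin m) :
    pairSum (u + u') (v + v') z = pairSum u v z + pairSum u' v' z := by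
  rcases z with k | k <;> simp only [pairSum, Sum.elim_inl, Sum.elim_inr, Pi.add_apply,
    Prod.mk_add_mk] <;> congr 1 <;> ring

variable {n : ℕ} {Θ : Fin (n - 1) ⊕ Fin (n - 1) → Fin (n - 1) ⊕ Fin (n - 1)}
  {u v : ℕ → ℕ}

theorem ctrlEq_iff_pairSum :
    ctrlEq n Θ u v ↔ ∀ k, pairSum u v (Θ (Sum.inl k)) = pairSum u v (Sum.inl k) := by
  constructor
  · intro h k
    rcases hk : Θ (Sum.inl k) with j | j
    · obtain ⟨h1, h2⟩ := (h k j).2 hk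
      simp [pairSum, h1, h2]
    · obtain ⟨h1, h2⟩ := (h k j).1 hk
      simp [pairSum, h1, h2]
  · intro h k j
    refine ⟨fun hk => ?_, fun hk => ?_⟩ <;> have := h k <;>
      simp only [hk, pairSum, Sum.elim_inl, Sum.elim_inr, Prod.mk.injEq] at this <;> omega

theorem ctrlEq_zero : ctrlEq n Θ 0 0 :=
  fun _ _ => ⟨fun _ => ⟨rfl, rfl⟩, fun _ => ⟨rfl, rfl⟩⟩

theorem ctrlEq.add {u' v' : ℕ → ℕ} (h : ctrlEq n Θ u v) (h' : ctrlEq n Θ u' v') :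
    ctrlEq n Θ (u + u') (v + v') :=
  ctrlEq_iff_pairSum.2 fun k => by
    rw [pairSum_add, pairSum_add, ctrlEq_iff_pairSum.1 h, ctrlEq_iff_pairSum.1 h']

noncomputable def matchingRing (K : Type*) [Field K] (n : ℕ)
    (Θ : Fin (n - 1) ⊕ Fin (n - 1) → Fin (n - 1) ⊕ Fin (n - 1)) :
    Subalgebra K (MvPolynomial (Fin n ⊕ Fin n) K) :=
  controlSubalgebra K n (ctrlEq n Θ) ctrlEq_zero ctrlEq.add

theorem coe_matchingRing (K : Type*) [Field K] (n : ℕ)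
    (Θ : Fin (n - 1) ⊕ Fin (n - 1) → Fin (n - 1) ⊕ Fin (n - 1)) :
    (matchingRing K n Θ : Set (MvPolynomial (Fin n ⊕ Fin n) K)) =
      controlSpan K n (ctrlEq n Θ) :=
  coe_controlSubalgebra K n _ _ _

theorem monAB_mem_matchingRing {K : Type*} [Field K] (h : ctrlEq n Θ u v) :
    monAB K n u v ∈ matchingRing K n Θ :=
  Algebra.subset_adjoin ⟨u, v, h, rfl⟩

end ControlEquations

section Splicing

variable (i : ℕ)

/-- The exponent vector of `A_i^a` times the image of the monomial with exponents `u` under the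
substitution `substVar`: `a` is inserted at `i`, and `u_{i-1}` is repeated at `i + 1`. -/
def expandExp (u : ℕ → ℕ) (a : ℕ) : ℕ → ℕ := fun m =>
  if m = i then a else if m < i then u m else u (m - 2)

def contractExp (u : ℕ → ℕ) : ℕ → ℕ := fun m =>
  if m < i then u m else u (m + 2)

variable {i}

theorem contractExp_expandExp (u : ℕ → ℕ) (a : ℕ) :
    contractExp i (expandExp i u a) = u := by
  funext m
  simp only [contractExp, expandExp]
  split_ifs <;> first | rfl | omega

theorem expandExp_contractExp (hi : 1 ≤ i) {u : ℕ → ℕ} (h : u (i + 1) = u (i - 1)) :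
    expandExp i (contractExp i u) (u i) = u := by
  funext m
  simp only [contractExp, expandExp]
  split_ifs with h1 h2 h3
  · rw [h1]
  · rfl
  · rw [show m = i + 1 by omega, h, show i + 1 - 2 = i - 1 by omega]
  · congr 1; omega

theorem expandExp_zero (a : ℕ) : expandExp i 0 a = Pi.single i a := by
  funext m
  simp only [expandExp, Pi.single_apply, Pi.zero_apply]
  split_ifs <;> rfl

theorem expandExp_add_single (u : ℕ → ℕ) (a : ℕ) :
    expandExp i u 0 + Pi.single i a = expandExp i u a := by
  funext m
  simp only [expandExp, Pi.add_apply, Pi.single_apply]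
  split_ifs <;> simp

theorem expandExp_add_expandExp_of_lt (hi : 2 ≤ i) (u : ℕ → ℕ) (a : ℕ) {c : ℕ}
    (hc : c < i - 2) :
    expandExp i u a (c + 1) + expandExp i u a (c + 2) = u (c + 1) + u (c + 2) := by
  simp only [expandExp]
  rw [if_neg (by omega), if_pos (by omega), if_neg (by omega), if_pos (by omega)]

theorem expandExp_add_expandExp_of_ge (hi : 2 ≤ i) (u : ℕ → ℕ) (a : ℕ) {c : ℕ}
    (hc : i - 2 ≤ c) :
    expandExp i u a (c + 2 + 1) + expandExp i u a (c + 2 + 2) = u (c + 1) + u (c + 2) := by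
  simp only [expandExp]
  rw [if_neg (by omega), if_neg (by omega), if_neg (by omega), if_neg (by omega)]
  rfl

theorem pairSum_expandExp_map_embF (hi : 2 ≤ i) {n : ℕ} (u v : ℕ → ℕ) (a b : ℕ)
    (z : Fin (n - 3) ⊕ Fin (n - 3)) :
    pairSum (expandExp i u a) (expandExp i v b) (Sum.map (embF n i) (embF n i) z) =
      pairSum u v z := by
  rcases z with c | c <;>
  · simp only [pairSum, Sum.map_inl, Sum.map_inr, Sum.elim_inl, Sum.elim_inr, embF]
    split_ifs with hc
    · simp only [expandExp_add_expandExp_of_lt hi _ _ hc]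
    · simp only [expandExp_add_expandExp_of_ge hi _ _ (not_lt.1 hc)]

theorem pairSum_expandExp_gap (hi : 2 ≤ i) {n : ℕ} (hin : i < n) (u v : ℕ → ℕ)
    (a b : ℕ) :
    pairSum (expandExp i u a) (expandExp i v b) (Sum.inl (⟨i - 1, by omega⟩ : Fin (n - 1))) =
      pairSum (expandExp i u a) (expandExp i v b)
        (Sum.inl (⟨i - 2, by omega⟩ : Fin (n - 1))) := by
  simp only [pairSum, Sum.elim_inl, expandExp]
  rw [show i - 1 + 1 = i by omega, show i - 1 + 2 = i + 1 by omega,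
    show i - 2 + 1 = i - 1 by omega, show i - 2 + 2 = i by omega]
  simp only [if_neg (show i + 1 ≠ i by omega), if_neg (show ¬ i + 1 < i by omega),
    if_neg (show i - 1 ≠ i by omega), if_pos (show i - 1 < i by omega),
    show i + 1 - 2 = i - 1 by omega]
  simp only [add_comm]

end Splicing

section Matching

variable {n i : ℕ}

variable (i) in
/-- `x_{i-1}, x_i, y_{i-1}, y_i` (0-indexed: `k = i - 2, i - 1`), the elements of `Z(n-1)`
that are not in the image of `embF n i`. -/
def IsGapPair {m : ℕ} : Fin m ⊕ Fin m → Prop :=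
  Sum.elim (fun k => (k : ℕ) + 2 = i ∨ (k : ℕ) + 1 = i)
    fun k => (k : ℕ) + 2 = i ∨ (k : ℕ) + 1 = i

theorem exists_embF_eq (hi : 2 ≤ i) (hin : i < n) {k : Fin (n - 1)}
    (hk : ¬((k : ℕ) + 2 = i ∨ (k : ℕ) + 1 = i)) : ∃ c, embF n i c = k :=
  ⟨⟨if (k : ℕ) < i - 2 then k else k - 2, by have := k.isLt; split_ifs <;> omega⟩,
    Fin.ext (by simp only [embF]; split_ifs <;> omega)⟩

theorem exists_map_embF_eq (hi : 2 ≤ i) (hin : i < n) {z : Fin (n - 1) ⊕ Fin (n - 1)}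
    (hz : ¬IsGapPair i z) : ∃ w, Sum.map (embF n i) (embF n i) w = z := by
  rcases z with k | k
  · obtain ⟨c, rfl⟩ := exists_embF_eq hi hin hz
    exact ⟨Sum.inl c, rfl⟩
  · obtain ⟨c, rfl⟩ := exists_embF_eq hi hin hz
    exact ⟨Sum.inr c, rfl⟩

variable {Θ : Fin (n - 1) ⊕ Fin (n - 1) → Fin (n - 1) ⊕ Fin (n - 1)}
  {Θ' : Fin (n - 3) ⊕ Fin (n - 3) → Fin (n - 3) ⊕ Fin (n - 3)}
  (hi : 2 ≤ i) (hin : i < n)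
  (hΘi : Θ (Sum.inl (⟨i - 2, by omega⟩ : Fin (n - 1))) = Sum.inl ⟨i - 1, by omega⟩)
include hi hin hΘi

theorem ctrlEq_gap {u v : ℕ → ℕ} (h : ctrlEq n Θ u v) :
    u (i + 1) = u (i - 1) ∧ v (i + 1) = v (i - 1) := by
  have := ctrlEq_iff_pairSum.1 h ⟨i - 2, by omega⟩
  simp only [hΘi, pairSum, Sum.elim_inl, Prod.mk.injEq, show i - 1 + 1 = i by omega,
    show i - 1 + 2 = i + 1 by omega, show i - 2 + 1 = i - 1 by omega,
    show i - 2 + 2 = i by omega] at this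
  omega

theorem ctrlEq_contractExp
    (hΘ' : ∀ z w, Θ' z = w ↔
      Θ (Sum.map (embF n i) (embF n i) z) = Sum.map (embF n i) (embF n i) w)
    {u v : ℕ → ℕ} (h : ctrlEq n Θ u v) :
    ctrlEq (n - 2) Θ' (contractExp i u) (contractExp i v) := by
  obtain ⟨hu, hv⟩ := ctrlEq_gap hi hin hΘi h
  have hsum : ∀ z, pairSum (contractExp i u) (contractExp i v) z =
      pairSum u v (Sum.map (embF n i) (embF n i) z) := fun z => by
    conv_rhs =>
      rw [← expandExp_contractExp (by omega) hu, ← expandExp_contractExp (by omega) hv]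
    exact (pairSum_expandExp_map_embF hi _ _ _ _ z).symm
  rw [ctrlEq_iff_pairSum] at h ⊢
  intro c
  rw [hsum, hsum, ← (hΘ' _ _).1 rfl]
  exact h (embF n i c)

variable (hinv : Function.Involutive Θ)
  (hsym : ∀ k j : Fin (n - 1),
      (Θ (Sum.inl k) = Sum.inl j ↔ Θ (Sum.inr k) = Sum.inr j) ∧
      (Θ (Sum.inl k) = Sum.inr j ↔ Θ (Sum.inr k) = Sum.inl j))
include hinv

theorem apply_inl_gap_snd :
    Θ (Sum.inl (⟨i - 1, by omega⟩ : Fin (n - 1))) = Sum.inl ⟨i - 2, by omega⟩ := by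
  rw [← hΘi, hinv]

include hsym in
theorem isGapPair_apply {z : Fin (n - 1) ⊕ Fin (n - 1)} (hz : IsGapPair i z) :
    IsGapPair i (Θ z) := by
  have hb := apply_inl_gap_snd hi hin hΘi hinv
  rcases z with k | k <;> rcases hz with hk | hk
  · rw [show k = ⟨i - 2, by omega⟩ from Fin.ext (by simp only; omega), hΘi]
    simp only [IsGapPair, Sum.elim_inl]; omega
  · rw [show k = ⟨i - 1, by omega⟩ from Fin.ext (by simp only; omega), hb]
    simp only [IsGapPair, Sum.elim_inl]; omega
  · rw [show k = ⟨i - 2, by omega⟩ from Fin.ext (by simp only; omega), ((hsym _ _).1.1 hΘi)]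
    simp only [IsGapPair, Sum.elim_inr]; omega
  · rw [show k = ⟨i - 1, by omega⟩ from Fin.ext (by simp only; omega), ((hsym _ _).1.1 hb)]
    simp only [IsGapPair, Sum.elim_inr]; omega

include hsym in
theorem ctrlEq_expandExp
    (hΘ' : ∀ z w, Θ' z = w ↔
      Θ (Sum.map (embF n i) (embF n i) z) = Sum.map (embF n i) (embF n i) w)
    {u v : ℕ → ℕ} (h : ctrlEq (n - 2) Θ' u v) (a b : ℕ) :
    ctrlEq n Θ (expandExp i u a) (expandExp i v b) := by
  rw [ctrlEq_iff_pairSum] at h ⊢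
  intro k
  by_cases hk : IsGapPair i (Sum.inl k : Fin (n - 1) ⊕ Fin (n - 1))
  · rcases hk with hk | hk
    · rw [show k = ⟨i - 2, by omega⟩ from Fin.ext (by simp only; omega), hΘi,
        pairSum_expandExp_gap hi hin]
    · rw [show k = ⟨i - 1, by omega⟩ from Fin.ext (by simp only; omega),
        apply_inl_gap_snd hi hin hΘi hinv, pairSum_expandExp_gap hi hin]
  · obtain ⟨w, hw⟩ := exists_map_embF_eq hi hin fun h' =>
      hk (hinv (Sum.inl k) ▸ isGapPair_apply hi hin hΘi hinv hsym h')
    obtain ⟨c, rfl⟩ := exists_embF_eq hi hin hk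
    rw [← hw, pairSum_expandExp_map_embF hi, ← (hΘ' (Sum.inl c) w).2 hw.symm, h c]
    exact (pairSum_expandExp_map_embF hi u v a b (Sum.inl c)).symm

end Matching

section Substitution

variable {K : Type*} [Field K] {n i : ℕ}

variable (n i) in
def varEmb (m : Fin (n - 2)) : Fin n :=
  ⟨if (m : ℕ) < i - 1 then m else m + 2, by have := m.isLt; split_ifs <;> omega⟩

variable (n i) in
def varCollapse (hi : 2 ≤ i) (hin : i < n) (p : Fin n) : Fin (n - 2) :=
  ⟨if (p : ℕ) < i - 1 then p else p - 2, by have := p.isLt; split_ifs <;> omega⟩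

theorem varEmb_ne (m : Fin (n - 2)) :
    (varEmb n i m : ℕ) ≠ i - 1 ∧ (varEmb n i m : ℕ) ≠ i := by
  simp only [varEmb]; split_ifs <;> omega

theorem varCollapse_varEmb (hi : 2 ≤ i) (hin : i < n) (m : Fin (n - 2)) :
    varCollapse n i hi hin (varEmb n i m) = m :=
  Fin.ext (by simp only [varCollapse, varEmb]; split_ifs <;> omega)

theorem expandExp_varEmb (w : ℕ → ℕ) (a : ℕ) (m : Fin (n - 2)) :
    expandExp i w a (varEmb n i m + 1) = w (m + 1) := by
  simp only [expandExp, varEmb]; split_ifs <;> first | omega | rfl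

theorem prod_eq_prod_varEmb_mul {M : Type*} [CommMonoid M] (hi : 2 ≤ i) (hin : i < n)
    (f : Fin n → M) :
    ∏ p, f p = (∏ m, f (varEmb n i m)) * (f ⟨i - 1, by omega⟩ * f ⟨i, hin⟩) := by
  rw [← Finset.prod_compl_mul_prod {⟨i - 1, by omega⟩, ⟨i, hin⟩},
    Finset.prod_pair (by simp [Fin.ext_iff]; omega)]
  congr 1
  symm
  refine Finset.prod_nbij' (varEmb n i) (varCollapse n i hi hin) (fun m _ => ?_) (by simp)
    (fun m _ => varCollapse_varEmb hi hin m) (fun p hp => ?_) (fun _ _ => rfl)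
  · have := varEmb_ne (i := i) m
    simp [Fin.ext_iff]; omega
  · simp only [Finset.mem_compl, Finset.mem_insert, Finset.mem_singleton, Fin.ext_iff] at hp
    simp only [Fin.ext_iff, varEmb, varCollapse]
    split_ifs <;> omega

theorem prod_pow_expandExp {M : Type*} [CommMonoid M] (hi : 2 ≤ i) (hin : i < n)
    (f : Fin n → M) (w : ℕ → ℕ) :
    ∏ m : Fin (n - 2),
        (f (varEmb n i m) * if (m : ℕ) = i - 2 then f ⟨i, hin⟩ else 1) ^ w (m + 1) =
      ∏ p, f p ^ expandExp i w 0 (p + 1) := by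
  rw [prod_eq_prod_varEmb_mul hi hin]
  simp only [mul_pow, Finset.prod_mul_distrib, expandExp_varEmb]
  congr 1
  rw [Fintype.prod_eq_single ⟨i - 2, by omega⟩ fun m hm => by
    rw [if_neg fun h => hm (Fin.ext h), one_pow]]
  simp only [expandExp, if_pos, show i - 1 + 1 = i by omega, if_neg (show i + 1 ≠ i by omega),
    if_neg (show ¬ i + 1 < i by omega), show i + 1 - 2 = i - 2 + 1 by omega]
  simp

variable (K n i) in
/-- In 1-indexed terms: `A'_k ↦ A_k` for `k < i - 1`, `A'_{i-1} ↦ A_{i-1} A_{i+1}` and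
`A'_k ↦ A_{k+2}` for `k ≥ i`; likewise for the `B'_k`. -/
noncomputable def substVar (hin : i < n) :
    Fin (n - 2) ⊕ Fin (n - 2) → MvPolynomial (Fin n ⊕ Fin n) K :=
  Sum.elim
    (fun m => X (Sum.inl (varEmb n i m)) *
      if (m : ℕ) = i - 2 then X (Sum.inl ⟨i, hin⟩) else 1)
    fun m => X (Sum.inr (varEmb n i m)) *
      if (m : ℕ) = i - 2 then X (Sum.inr ⟨i, hin⟩) else 1

theorem aeval_substVar_monAB (hi : 2 ≤ i) (hin : i < n) (u v : ℕ → ℕ) :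
    aeval (substVar K n i hin) (monAB K (n - 2) u v) =
      monAB K n (expandExp i u 0) (expandExp i v 0) := by
  simp only [monAB, map_mul, map_prod, map_pow, aeval_X, substVar, Sum.elim_inl, Sum.elim_inr]
  rw [prod_pow_expandExp hi hin (fun p => X (Sum.inl p)),
    prod_pow_expandExp hi hin (fun p => X (Sum.inr p))]

variable (K n i) in
noncomputable def retractVar (hi : 2 ≤ i) (hin : i < n) :
    Fin n ⊕ Fin n → MvPolynomial (Fin 2) (MvPolynomial (Fin (n - 2) ⊕ Fin (n - 2)) K) :=
  Sum.elim
    (fun p => if (p : ℕ) = i - 1 then X 0 else if (p : ℕ) = i then 1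
      else C (X (Sum.inl (varCollapse n i hi hin p))))
    fun p => if (p : ℕ) = i - 1 then X 1 else if (p : ℕ) = i then 1
      else C (X (Sum.inr (varCollapse n i hi hin p)))

theorem aeval_retractVar_substVar (hi : 2 ≤ i) (hin : i < n) (s : Fin (n - 2) ⊕ Fin (n - 2)) :
    aeval (retractVar K n i hi hin) (substVar K n i hin s) = C (X s) := by
  rcases s with m | m <;>
  · obtain ⟨h1, h2⟩ := varEmb_ne (i := i) m
    simp only [substVar, retractVar, Sum.elim_inl, Sum.elim_inr, map_mul, aeval_X, h1, h2,
      if_false, varCollapse_varEmb, apply_ite (aeval _), map_one]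
    split_ifs <;> first | omega | simp

theorem MvPolynomial.aevalTower_leftInverse {R A B σ : Type*} [CommSemiring R] [CommSemiring A]
    [CommSemiring B] [Algebra R A] [Algebra R B] {ψ : A →ₐ[R] B} {x : σ → B}
    {L : B →ₐ[R] MvPolynomial σ A} (hψ : ∀ a, L (ψ a) = C a) (hx : ∀ t, L (x t) = X t) :
    Function.LeftInverse L (aevalTower ψ x) := by
  intro q
  induction q using MvPolynomial.induction_on with
  | C a => rw [aevalTower_C, hψ]
  | add p q hp hq => rw [map_add, map_add, hp, hq]
  | mul_X p t hp => rw [map_mul, map_mul, hp, aevalTower_X, hx]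

variable (K) in
noncomputable def gapAlgHom (hi : 2 ≤ i) (hin : i < n) :
    MvPolynomial (Fin 2) (MvPolynomial (Fin (n - 2) ⊕ Fin (n - 2)) K) →ₐ[K]
      MvPolynomial (Fin n ⊕ Fin n) K :=
  aevalTower (aeval (substVar K n i hin))
    ![X (Sum.inl ⟨i - 1, by omega⟩), X (Sum.inr ⟨i - 1, by omega⟩)]

theorem gapAlgHom_injective (hi : 2 ≤ i) (hin : i < n) :
    Function.Injective (gapAlgHom K hi hin) := by
  refine (aevalTower_leftInverse (L := aeval (retractVar K n i hi hin)) (fun a => ?_) ?_).injective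
  · have : (aeval (retractVar K n i hi hin)).comp (aeval (substVar K n i hin)) =
        IsScalarTower.toAlgHom K _ _ :=
      algHom_ext fun s => by simp [aeval_retractVar_substVar]
    exact AlgHom.congr_fun this a
  · intro t
    fin_cases t <;> simp [retractVar]

theorem gapAlgHom_C_mul (hi : 2 ≤ i) (hin : i < n) (u v : ℕ → ℕ) (a b : ℕ) :
    gapAlgHom K hi hin (C (monAB K (n - 2) u v) * X 0 ^ a * X 1 ^ b) =
      monAB K n (expandExp i u a) (expandExp i v b) := by
  have hA := monAB_single_left (K := K) (⟨i - 1, by omega⟩ : Fin n) a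
  have hB := monAB_single_right (K := K) (⟨i - 1, by omega⟩ : Fin n) b
  simp only [show i - 1 + 1 = i by omega] at hA hB
  simp only [gapAlgHom, map_mul, map_pow, aevalTower_C, aevalTower_X, Matrix.cons_val_zero,
    Matrix.cons_val_one, aeval_substVar_monAB hi hin, ← hA, ← hB, ← monAB_add, add_zero,
    expandExp_add_single]

theorem gapAlgHom_mapAlgHom_mem (hi : 2 ≤ i) (hin : i < n)
    {S' : Subalgebra K (MvPolynomial (Fin (n - 2) ⊕ Fin (n - 2)) K)}
    {S : Subalgebra K (MvPolynomial (Fin n ⊕ Fin n) K)}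
    (hS : S'.map (aeval (substVar K n i hin)) ≤ S)
    (hA : X (Sum.inl ⟨i - 1, by omega⟩) ∈ S) (hB : X (Sum.inr ⟨i - 1, by omega⟩) ∈ S)
    (p : MvPolynomial (Fin 2) S') : gapAlgHom K hi hin (mapAlgHom S'.val p) ∈ S := by
  induction p using MvPolynomial.induction_on with
  | C r =>
    rw [mapAlgHom_apply, map_C, gapAlgHom, aevalTower_C]
    exact hS ⟨r, r.2, rfl⟩
  | add p q hp hq => rw [map_add, map_add]; exact add_mem hp hq
  | mul_X p t hp =>
    rw [map_mul, map_mul]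
    refine mul_mem hp ?_
    rw [mapAlgHom_apply, map_X, gapAlgHom, aevalTower_X]
    fin_cases t
    exacts [hA, hB]

theorem gapAlgHom_mapAlgHom_C_mul (hi : 2 ≤ i) (hin : i < n)
    {S' : Subalgebra K (MvPolynomial (Fin (n - 2) ⊕ Fin (n - 2)) K)} {u v : ℕ → ℕ}
    (r : S') (hr : (r : MvPolynomial _ K) = monAB K (n - 2) u v) (a b : ℕ) :
    gapAlgHom K hi hin (mapAlgHom S'.val (C r * X 0 ^ a * X 1 ^ b)) =
      monAB K n (expandExp i u a) (expandExp i v b) := by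
  rw [← gapAlgHom_C_mul hi hin, ← hr]
  simp

end Substitution

section Reduction

variable {K : Type*} [Field K] {n i : ℕ}
  {Θ : Fin (n - 1) ⊕ Fin (n - 1) → Fin (n - 1) ⊕ Fin (n - 1)}
  {Θ' : Fin (n - 3) ⊕ Fin (n - 3) → Fin (n - 3) ⊕ Fin (n - 3)}
  (hi : 2 ≤ i) (hin : i < n)
  (hΘi : Θ (Sum.inl (⟨i - 2, by omega⟩ : Fin (n - 1))) = Sum.inl ⟨i - 1, by omega⟩)
  (hinv : Function.Involutive Θ)
  (hsym : ∀ k j : Fin (n - 1),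
      (Θ (Sum.inl k) = Sum.inl j ↔ Θ (Sum.inr k) = Sum.inr j) ∧
      (Θ (Sum.inl k) = Sum.inr j ↔ Θ (Sum.inr k) = Sum.inl j))
  (hΘ' : ∀ z w, Θ' z = w ↔
      Θ (Sum.map (embF n i) (embF n i) z) = Sum.map (embF n i) (embF n i) w)
include hi hin hΘi hinv hsym hΘ'

theorem X_inl_mem_matchingRing :
    X (Sum.inl (⟨i - 1, by omega⟩ : Fin n)) ∈ matchingRing K n Θ := by
  have := monAB_mem_matchingRing (K := K)
    (ctrlEq_expandExp hi hin hΘi hinv hsym hΘ' ctrlEq_zero 1 0)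
  rwa [expandExp_zero, expandExp_zero, Pi.single_zero,
    show i = ((⟨i - 1, by omega⟩ : Fin n) : ℕ) + 1 by simp only; omega, monAB_single_left,
    pow_one] at this

theorem X_inr_mem_matchingRing :
    X (Sum.inr (⟨i - 1, by omega⟩ : Fin n)) ∈ matchingRing K n Θ := by
  have := monAB_mem_matchingRing (K := K)
    (ctrlEq_expandExp hi hin hΘi hinv hsym hΘ' ctrlEq_zero 0 1)
  rwa [expandExp_zero, expandExp_zero, Pi.single_zero,
    show i = ((⟨i - 1, by omega⟩ : Fin n) : ℕ) + 1 by simp only; omega, monAB_single_right,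
    pow_one] at this

theorem map_matchingRing_le :
    (matchingRing K (n - 2) Θ').map (aeval (substVar K n i hin)) ≤ matchingRing K n Θ := by
  rw [matchingRing, controlSubalgebra, AlgHom.map_adjoin, Algebra.adjoin_le_iff]
  rintro _ ⟨_, ⟨u, v, h, rfl⟩, rfl⟩
  rw [aeval_substVar_monAB hi hin]
  exact monAB_mem_matchingRing (ctrlEq_expandExp hi hin hΘi hinv hsym hΘ' h 0 0)

theorem nonempty_algEquiv_matchingRing :
    Nonempty (matchingRing K n Θ ≃ₐ[K] MvPolynomial (Fin 2) (matchingRing K (n - 2) Θ')) := by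
  set T' := matchingRing K (n - 2) Θ'
  let Φ := (gapAlgHom K hi hin).comp (mapAlgHom T'.val)
  have hΦ : Function.Injective Φ :=
    (gapAlgHom_injective hi hin).comp (map_injective _ Subtype.val_injective)
  have hrange : Φ.range = matchingRing K n Θ := by
    refine le_antisymm ?_ ?_
    · rintro _ ⟨p, rfl⟩
      exact gapAlgHom_mapAlgHom_mem hi hin (map_matchingRing_le hi hin hΘi hinv hsym hΘ')
        (X_inl_mem_matchingRing hi hin hΘi hinv hsym hΘ')
        (X_inr_mem_matchingRing hi hin hΘi hinv hsym hΘ') p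
    · rw [matchingRing, controlSubalgebra, Algebra.adjoin_le_iff]
      rintro _ ⟨u, v, h, rfl⟩
      obtain ⟨hu, hv⟩ := ctrlEq_gap hi hin hΘi h
      refine ⟨C ⟨_, monAB_mem_matchingRing (ctrlEq_contractExp hi hin hΘi hΘ' h)⟩ *
        X 0 ^ u i * X 1 ^ v i, ?_⟩
      refine (gapAlgHom_mapAlgHom_C_mul hi hin _ rfl _ _).trans ?_
      rw [expandExp_contractExp (by omega) hu, expandExp_contractExp (by omega) hv]
  exact ⟨(Subalgebra.equivOfEq _ _ hrange.symm).trans (AlgEquiv.ofInjective Φ hΦ).symm⟩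

end Reduction

/-- Reduction: if `Θ(x_{i-1}) = x_i` (hence `Θ(y_{i-1}) = y_i`), and `Θ'` is the
symmetric matching on `Z(n-3)` obtained by restricting `Θ` and relabeling, then
`A_i, B_i ∈ S(Θ)` and `S(Θ)` is isomorphic as a `K`-algebra to the polynomial ring
in two variables over `S(Θ')`. -/
theorem stmt12 (K : Type*) [Field K] (n : ℕ)
    (i : ℕ) (hi1 : 2 ≤ i) (hi2 : i ≤ n - 1)
    (Θ : Fin (n - 1) ⊕ Fin (n - 1) → Fin (n - 1) ⊕ Fin (n - 1))
    (hinv : Function.Involutive Θ)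
    (hsym : ∀ k j : Fin (n - 1),
      (Θ (Sum.inl k) = Sum.inl j ↔ Θ (Sum.inr k) = Sum.inr j) ∧
      (Θ (Sum.inl k) = Sum.inr j ↔ Θ (Sum.inr k) = Sum.inl j))
    (hΘi : Θ (Sum.inl (⟨i - 2, by omega⟩ : Fin (n - 1))) =
      Sum.inl (⟨i - 1, by omega⟩ : Fin (n - 1)))
    (Θ' : Fin (n - 3) ⊕ Fin (n - 3) → Fin (n - 3) ⊕ Fin (n - 3))
    (hΘ' : ∀ z w : Fin (n - 3) ⊕ Fin (n - 3),
      Θ' z = w ↔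
        Θ (Sum.map (embF n i) (embF n i) z) = Sum.map (embF n i) (embF n i) w) :
    X (Sum.inl (⟨i - 1, by omega⟩ : Fin n)) ∈ controlSpan K n (ctrlEq n Θ) ∧
    X (Sum.inr (⟨i - 1, by omega⟩ : Fin n)) ∈ controlSpan K n (ctrlEq n Θ) ∧
    ∃ (T : Subalgebra K (MvPolynomial (Fin n ⊕ Fin n) K))
      (T' : Subalgebra K (MvPolynomial (Fin (n - 2) ⊕ Fin (n - 2)) K)),
      (T : Set (MvPolynomial (Fin n ⊕ Fin n) K)) = ↑(controlSpan K n (ctrlEq n Θ)) ∧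
      (T' : Set (MvPolynomial (Fin (n - 2) ⊕ Fin (n - 2)) K)) =
        ↑(controlSpan K (n - 2) (ctrlEq (n - 2) Θ')) ∧
      Nonempty (T ≃ₐ[K] MvPolynomial (Fin 2) T') := by
  have hin : i < n := by omega
  have hT := coe_matchingRing K n Θ
  refine ⟨?_, ?_, _, _, hT, coe_matchingRing K (n - 2) Θ',
    nonempty_algEquiv_matchingRing hi1 hin hΘi hinv hsym hΘ'⟩
  · rw [← SetLike.mem_coe, ← hT]
    exact X_inl_mem_matchingRing hi1 hin hΘi hinv hsym hΘ'
  · rw [← SetLike.mem_coe, ← hT]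
    exact X_inr_mem_matchingRing hi1 hin hΘi hinv hsym hΘ'
end

section
/- Let K be a field and S = K[A_1,…,A_6,B_1,…,B_6]. Let S(Θ) be the K-span of the monomials A_1^{u_1}⋯A_6^{u_6}B_1^{v_1}⋯B_6^{v_6} satisfying u_1+u_2 = u_4+u_5, v_1+v_2 = v_4+v_5, u_2+u_3 = v_2+v_3, u_3+u_4 = v_3+v_4, u_5+u_6 = v_5+v_6 (the matching Θ(x_1)=x_4, Θ(y_1)=y_4, Θ(x_2)=y_2, Θ(x_3)=y_3, Θ(x_5)=y_5 for n = 6). Then S(Θ) is generated as a K-algebra by X_1 = A_3B_3, X_2 = A_6B_6, Y_1 = A_1A_5B_6, Y_2 = A_2A_4B_3, Y_3 = A_3B_2B_4, Y_4 = A_6B_1B_5, Z_1 = A_1A_4B_1B_4, Z_2 = A_1A_5B_1B_5, Z_3 = A_2A_4B_2B_4, Z_4 = A_2A_5B_2B_5, and the kernel of the K-algebra homomorphism from the polynomial ring in 10 variables onto S(Θ) sending the variables to these generators is generated by the three elements Y_1Y_4 − X_2Z_2, Y_2Y_3 − X_1Z_3, Z_1Z_4 − Z_2Z_3 (written in the corresponding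 polynomial variables); so S(Θ) is a complete intersection of codimension 3. -/
open MvPolynomial

/-!
The generators are monomials, so both claims are statements about exponent vectors. Sending
`d ∈ ℕ¹⁰` to the exponent `∑ dⱼ wⱼ` of `X₁^d₀ ⋯ Z₄^d₉`, the generation claim says that the image
of this additive map is exactly the monoid of solutions of the control equations; a solution has
an explicit preimage.

For the kernel, the three binomials let us rewrite `Y₁Y₄ ↦ X₂Z₂`, `Y₂Y₃ ↦ X₁Z₃`, `Z₁Z₄ ↦ Z₂Z₃`,
so every monomial is congruent to a standard one, divisible by none of `Y₁Y₄, Y₂Y₃, Z₁Z₄`. The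
exponent map is injective on standard monomials, so a kernel element, once reduced to standard
form, has pairwise distinct image monomials and must vanish.
-/

open Finsupp

section MonomialMap

variable {R σ τ : Type*} (w : σ → τ →₀ ℕ)

theorem aeval_monomial_of_monomials [CommSemiring R] (d : σ →₀ ℕ) (c : R) :
    aeval (fun j => monomial (w j) (1 : R)) (monomial d c) =
      monomial (linearCombination ℕ w d) c := by
  simp only [aeval_monomial, monomial_pow, one_pow, linearCombination_apply,
    monomial_finsupp_sum_index, algebraMap_eq]

theorem coe_adjoin_range_monomial [CommSemiring R] :
    (Algebra.adjoin R (Set.range fun j => monomial (w j) (1 : R)) : Set (MvPolynomial τ R)) =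
      Submodule.span R ((fun e => monomial e (1 : R)) '' Set.range (linearCombination ℕ w)) := by
  rw [Algebra.adjoin_range_eq_range_aeval]
  have h := LinearMap.range_eq_map
    (aeval (R := R) fun j => monomial (w j) (1 : R) : MvPolynomial σ R →ₐ[R] _).toLinearMap
  rw [← (basisMonomials σ R).span_eq, Submodule.map_span, ← Set.range_comp] at h
  simp only [coe_basisMonomials, Function.comp_def, AlgHom.toLinearMap_apply,
    aeval_monomial_of_monomials] at h
  rw [← Set.range_comp, Function.comp_def, ← h]
  rfl

theorem eq_zero_of_aeval_monomials_eq_zero [CommSemiring R] {N : Set (σ →₀ ℕ)}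
    (hN : Set.InjOn (linearCombination ℕ w) N) {g : MvPolynomial σ R} (hg : ↑g.support ⊆ N)
    (h0 : aeval (fun j => monomial (w j) (1 : R)) g = 0) : g = 0 := by
  ext d
  by_cases hd : d ∈ g.support
  · have hcoeff : coeff (linearCombination ℕ w d) (aeval (fun j => monomial (w j) (1 : R)) g) =
        coeff d g := by
      conv_lhs => rw [g.as_sum, map_sum]
      classical
      simp only [aeval_monomial_of_monomials, coeff_sum, coeff_monomial]
      rw [Finset.sum_eq_single_of_mem d hd fun b hb hne =>
        if_neg fun h => hne (hN (hg hb) (hg hd) h), if_pos rfl]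
    rw [← hcoeff, h0, coeff_zero, coeff_zero]
  · rwa [coeff_zero, ← MvPolynomial.notMem_support_iff]

theorem ker_aeval_monomials_eq [CommRing R] (I : Ideal (MvPolynomial σ R)) {N : Set (σ →₀ ℕ)}
    (hI : I ≤ RingHom.ker (aeval fun j => monomial (w j) (1 : R)))
    (hN : Set.InjOn (linearCombination ℕ w) N)
    (hnf : ∀ d, ∃ d' ∈ N, monomial d (1 : R) - monomial d' 1 ∈ I) :
    RingHom.ker (aeval fun j => monomial (w j) (1 : R)) = I := by
  choose nf hnfN hnfI using hnf
  refine le_antisymm (fun f hf => ?_) hI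
  set g := ∑ d ∈ f.support, monomial (nf d) (coeff d f)
  have hfg : f - g ∈ I := by
    have : f - g = ∑ d ∈ f.support, C (coeff d f) * (monomial d 1 - monomial (nf d) 1) := by
      simp only [g, mul_sub, C_mul_monomial, mul_one, Finset.sum_sub_distrib,
        support_sum_monomial_coeff]
    rw [this]
    exact I.sum_mem fun d _ => I.mul_mem_left _ (hnfI d)
  have hg_support : ↑g.support ⊆ N := fun d hd => by
    classical
    obtain ⟨d', -, hd'⟩ := Finset.mem_biUnion.1 (MvPolynomial.support_sum hd)
    rw [Finset.mem_singleton.1 (support_monomial_subset hd')]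
    exact hnfN d'
  have hg : g = 0 := by
    refine eq_zero_of_aeval_monomials_eq_zero w hN hg_support ?_
    have := hI hfg
    rwa [RingHom.mem_ker, map_sub, RingHom.mem_ker.1 hf, zero_sub, neg_eq_zero] at this
  simpa [hg] using hfg

theorem monomial_add_nsmul [CommSemiring R] (r s : σ →₀ ℕ) (k : ℕ) :
    monomial (r + k • s) (1 : R) = monomial r 1 * monomial s 1 ^ k := by
  rw [monomial_pow, monomial_mul, one_pow, mul_one]

end MonomialMap

noncomputable def abExponent (n : ℕ) (u v : ℕ → ℕ) : Fin n ⊕ Fin n →₀ ℕ :=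
  equivFunOnFinite.symm (Sum.elim (fun i => u (i + 1)) (fun i => v (i + 1)))

@[simp]
theorem abExponent_inl (n : ℕ) (u v : ℕ → ℕ) (i : Fin n) :
    abExponent n u v (Sum.inl i) = u (i + 1) := rfl

@[simp]
theorem abExponent_inr (n : ℕ) (u v : ℕ → ℕ) (i : Fin n) :
    abExponent n u v (Sum.inr i) = v (i + 1) := rfl

theorem abExponent_surjective (n : ℕ) (e : Fin n ⊕ Fin n →₀ ℕ) :
    ∃ u v, abExponent n u v = e := by
  refine ⟨fun k => if h : k - 1 < n then e (.inl ⟨k - 1, h⟩) else 0,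
    fun k => if h : k - 1 < n then e (.inr ⟨k - 1, h⟩) else 0, ?_⟩
  ext (i | i) <;> simp

theorem monAB_eq_monomial (K : Type*) [Field K] (n : ℕ) (u v : ℕ → ℕ) :
    monAB K n u v = monomial (abExponent n u v) 1 := by
  rw [monomial_eq, C_1, one_mul, Finsupp.prod_fintype _ _ fun _ => pow_zero _,
    Fintype.prod_sum_type]
  rfl

theorem controlSpan_eq_span_image (K : Type*) [Field K] (n : ℕ)
    (E : (ℕ → ℕ) → (ℕ → ℕ) → Prop) :
    controlSpan K n E =
      Submodule.span K ((fun e => monomial e 1) '' {e | ∃ u v, E u v ∧ abExponent n u v = e}) := by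
  rw [controlSpan]
  congr 1
  ext p
  simp [monAB_eq_monomial, eq_comm]

def thetaEquations (u v : ℕ → ℕ) : Prop :=
  u 1 + u 2 = u 4 + u 5 ∧ v 1 + v 2 = v 4 + v 5 ∧
    u 2 + u 3 = v 2 + v 3 ∧ u 3 + u 4 = v 3 + v 4 ∧ u 5 + u 6 = v 5 + v 6

/-- `X₁, X₂, Y₁, Y₂, Y₃, Y₄, Z₁, Z₂, Z₃, Z₄`, in this order. -/
noncomputable def generator (K : Type*) [Field K] : Fin 10 → MvPolynomial (Fin 6 ⊕ Fin 6) K :=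
  ![Av K 6 2 * Bv K 6 2, Av K 6 5 * Bv K 6 5,
    Av K 6 0 * Av K 6 4 * Bv K 6 5, Av K 6 1 * Av K 6 3 * Bv K 6 2,
    Av K 6 2 * Bv K 6 1 * Bv K 6 3, Av K 6 5 * Bv K 6 0 * Bv K 6 4,
    Av K 6 0 * Av K 6 3 * Bv K 6 0 * Bv K 6 3,
    Av K 6 0 * Av K 6 4 * Bv K 6 0 * Bv K 6 4,
    Av K 6 1 * Av K 6 3 * Bv K 6 1 * Bv K 6 3,
    Av K 6 1 * Av K 6 4 * Bv K 6 1 * Bv K 6 4]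

noncomputable def generatorExponent : Fin 10 → (Fin 6 ⊕ Fin 6 →₀ ℕ) :=
  ![single (.inl 2) 1 + single (.inr 2) 1,
    single (.inl 5) 1 + single (.inr 5) 1,
    single (.inl 0) 1 + single (.inl 4) 1 + single (.inr 5) 1,
    single (.inl 1) 1 + single (.inl 3) 1 + single (.inr 2) 1,
    single (.inl 2) 1 + single (.inr 1) 1 + single (.inr 3) 1,
    single (.inl 5) 1 + single (.inr 0) 1 + single (.inr 4) 1,
    single (.inl 0) 1 + single (.inl 3) 1 + single (.inr 0) 1 + single (.inr 3) 1,
    single (.inl 0) 1 + single (.inl 4) 1 + single (.inr 0) 1 + single (.inr 4) 1,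
    single (.inl 1) 1 + single (.inl 3) 1 + single (.inr 1) 1 + single (.inr 3) 1,
    single (.inl 1) 1 + single (.inl 4) 1 + single (.inr 1) 1 + single (.inr 4) 1]

theorem generator_eq_monomial (K : Type*) [Field K] :
    generator K = fun j => monomial (generatorExponent j) 1 := by
  ext1 j
  fin_cases j <;> simp [generator, generatorExponent, Av, Bv, X, monomial_mul, add_assoc]

theorem linearCombination_generatorExponent (d : Fin 10 →₀ ℕ) :
    linearCombination ℕ generatorExponent d = equivFunOnFinite.symm (Sum.elim
      ![d 2 + d 6 + d 7, d 3 + d 8 + d 9, d 0 + d 4, d 3 + d 6 + d 8, d 2 + d 7 + d 9, d 1 + d 5]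
      ![d 5 + d 6 + d 7, d 4 + d 8 + d 9, d 0 + d 3, d 4 + d 6 + d 8, d 5 + d 7 + d 9,
        d 1 + d 2]) := by
  ext (i | i) <;> fin_cases i <;>
    simp [linearCombination_apply, Finsupp.sum_fintype, Fin.sum_univ_succ, generatorExponent,
      add_assoc]

theorem range_linearCombination_generatorExponent :
    Set.range (linearCombination ℕ generatorExponent) =
      {e | ∃ u v, thetaEquations u v ∧ abExponent 6 u v = e} := by
  ext e
  constructor
  · rintro ⟨d, rfl⟩
    obtain ⟨u, v, huv⟩ := abExponent_surjective 6 (linearCombination ℕ generatorExponent d)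
    refine ⟨u, v, ?_, huv⟩
    have hu : ∀ i : Fin 6, _ := fun i => congrArg (· (Sum.inl i)) huv
    have hv : ∀ i : Fin 6, _ := fun i => congrArg (· (Sum.inr i)) huv
    simp only [Fin.forall_fin_succ, abExponent_inl, abExponent_inr,
      linearCombination_generatorExponent, equivFunOnFinite_symm_apply_apply, Sum.elim_inl,
      Sum.elim_inr, Matrix.cons_val_zero, Matrix.cons_val_succ, Matrix.cons_val_fin_one,
      Fin.val_zero, Fin.val_succ, IsEmpty.forall_iff, and_true, zero_add, Nat.reduceAdd] at hu hv
    unfold thetaEquations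
    omega
  · rintro ⟨u, v, hE, rfl⟩
    obtain ⟨h1, h2, h3, h4, h5⟩ := hE
    -- At most one of `Y₁, Y₄`, of `Y₂, Y₃` and of `Z₁, Z₄` is used, according to the signs of
    -- `u₁ - v₁`, `u₃ - v₃` and `u₁ - u₅`; the other exponents are then forced.
    refine ⟨equivFunOnFinite.symm ![min (u 3) (v 3), v 6 - (u 1 - v 1), u 1 - v 1, v 3 - u 3,
      u 3 - v 3, v 1 - u 1, u 1 - u 5, u 1 - (u 1 - v 1) - (u 1 - u 5),
      u 2 - (v 3 - u 3) - (u 5 - u 1), u 5 - u 1], ?_⟩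
    rw [linearCombination_generatorExponent]
    ext (i | i) <;> fin_cases i <;> simp <;> omega

/-- The leading monomials `Y₁Y₄, Y₂Y₃, Z₁Z₄` of the relations do not divide `X^d`. -/
def IsStandardExponent (d : Fin 10 →₀ ℕ) : Prop :=
  (d 2 = 0 ∨ d 5 = 0) ∧ (d 3 = 0 ∨ d 4 = 0) ∧ (d 6 = 0 ∨ d 9 = 0)

theorem injOn_linearCombination_generatorExponent :
    Set.InjOn (linearCombination ℕ generatorExponent) {d | IsStandardExponent d} := by
  intro d hd d' hd' he
  have hl : ∀ i : Fin 6, _ := fun i => congrArg (· (Sum.inl i)) he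
  have hr : ∀ i : Fin 6, _ := fun i => congrArg (· (Sum.inr i)) he
  simp only [Fin.forall_fin_succ, linearCombination_generatorExponent,
    equivFunOnFinite_symm_apply_apply, Sum.elim_inl, Sum.elim_inr, Matrix.cons_val_zero,
    Matrix.cons_val_succ, Matrix.cons_val_fin_one, forall_const] at hl hr
  obtain ⟨h1, h2, h3⟩ := hd
  obtain ⟨h1', h2', h3'⟩ := hd'
  ext j
  fin_cases j <;> simp <;> omega

noncomputable def relationIdeal (R : Type*) [CommRing R] : Ideal (MvPolynomial (Fin 10) R) :=
  Ideal.span {X 2 * X 5 - X 1 * X 7, X 3 * X 4 - X 0 * X 8, X 6 * X 9 - X 7 * X 8}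

theorem relationIdeal_le_ker (K : Type*) [Field K] :
    relationIdeal K ≤ RingHom.ker (aeval (generator K)) := by
  rw [relationIdeal, Ideal.span_le]
  rintro r (rfl | rfl | rfl | rfl) <;>
    simp [generator, sub_eq_zero] <;> ring

theorem exists_isStandardExponent_sub_mem_relationIdeal (R : Type*) [CommRing R]
    (d : Fin 10 →₀ ℕ) :
    ∃ d' ∈ {d | IsStandardExponent d}, monomial d (1 : R) - monomial d' 1 ∈ relationIdeal R := by
  set a := min (d 2) (d 5)
  set b := min (d 3) (d 4)
  set c := min (d 6) (d 9)
  set r := d - (a • (single 2 1 + single 5 1) + b • (single 3 1 + single 4 1) +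
    c • (single 6 1 + single 9 1))
  have hd : d = r + a • (single 2 1 + single 5 1) + b • (single 3 1 + single 4 1) +
      c • (single 6 1 + single 9 1) := by
    ext j
    fin_cases j <;> simp [r] <;> omega
  refine ⟨r + a • (single 1 1 + single 7 1) + b • (single 0 1 + single 8 1) +
    c • (single 7 1 + single 8 1), ?_, ?_⟩
  · simp only [IsStandardExponent, Set.mem_ofPred_eq, r, smul_add, smul_single, smul_eq_mul,
      mul_one, Finsupp.coe_add, coe_tsub, Pi.add_apply, Pi.sub_apply, single_eq_same, ne_eq,
      Fin.reduceEq, not_false_eq_true, single_eq_of_ne, add_zero, zero_add]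
    omega
  · have hX (i j : Fin 10) : monomial (single i 1 + single j 1) (1 : R) = X i * X j := by
      rw [X, X, monomial_mul, one_mul]
    set π := Ideal.Quotient.mk (relationIdeal R)
    have hrel (i j k l : Fin 10) (h : X i * X j - X k * X l ∈ ({X 2 * X 5 - X 1 * X 7,
        X 3 * X 4 - X 0 * X 8, X 6 * X 9 - X 7 * X 8} : Set (MvPolynomial (Fin 10) R))) :
        π (X i) * π (X j) = π (X k) * π (X l) := by
      rw [← map_mul, ← map_mul]
      exact Ideal.Quotient.eq.2 (Ideal.subset_span h)
    rw [← Ideal.Quotient.eq]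
    conv_lhs => rw [hd]
    simp only [monomial_add_nsmul, hX, map_mul, map_pow]
    rw [hrel 2 5 1 7 (by simp), hrel 3 4 0 8 (by simp), hrel 6 9 7 8 (by simp)]

/-- For `n = 6` and the matching `Θ(x_1)=x_4, Θ(y_1)=y_4, Θ(x_2)=y_2, Θ(x_3)=y_3,
Θ(x_5)=y_5`: `S(Θ)` is generated by the listed ten monomials, and the kernel of the
presentation is generated by `Y_1Y_4 - X_2Z_2`, `Y_2Y_3 - X_1Z_3`, `Z_1Z_4 - Z_2Z_3`;
so `S(Θ)` is a complete intersection of codimension 3.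
Generator order: `X_1, X_2, Y_1, Y_2, Y_3, Y_4, Z_1, Z_2, Z_3, Z_4` ↦ variables `0,…,9`. -/
theorem stmt17 (K : Type*) [Field K] :
    ((Algebra.adjoin K
        ({Av K 6 2 * Bv K 6 2, Av K 6 5 * Bv K 6 5,
          Av K 6 0 * Av K 6 4 * Bv K 6 5, Av K 6 1 * Av K 6 3 * Bv K 6 2,
          Av K 6 2 * Bv K 6 1 * Bv K 6 3, Av K 6 5 * Bv K 6 0 * Bv K 6 4,
          Av K 6 0 * Av K 6 3 * Bv K 6 0 * Bv K 6 3,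
          Av K 6 0 * Av K 6 4 * Bv K 6 0 * Bv K 6 4,
          Av K 6 1 * Av K 6 3 * Bv K 6 1 * Bv K 6 3,
          Av K 6 1 * Av K 6 4 * Bv K 6 1 * Bv K 6 4} :
          Set (MvPolynomial (Fin 6 ⊕ Fin 6) K)) :
        Subalgebra K (MvPolynomial (Fin 6 ⊕ Fin 6) K)) : Set (MvPolynomial (Fin 6 ⊕ Fin 6) K)) =
      ↑(controlSpan K 6
        (fun u v => u 1 + u 2 = u 4 + u 5 ∧ v 1 + v 2 = v 4 + v 5 ∧
          u 2 + u 3 = v 2 + v 3 ∧ u 3 + u 4 = v 3 + v 4 ∧ u 5 + u 6 = v 5 + v 6)) ∧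
    RingHom.ker
        (aeval (R := K)
          ![Av K 6 2 * Bv K 6 2, Av K 6 5 * Bv K 6 5,
            Av K 6 0 * Av K 6 4 * Bv K 6 5, Av K 6 1 * Av K 6 3 * Bv K 6 2,
            Av K 6 2 * Bv K 6 1 * Bv K 6 3, Av K 6 5 * Bv K 6 0 * Bv K 6 4,
            Av K 6 0 * Av K 6 3 * Bv K 6 0 * Bv K 6 3,
            Av K 6 0 * Av K 6 4 * Bv K 6 0 * Bv K 6 4,
            Av K 6 1 * Av K 6 3 * Bv K 6 1 * Bv K 6 3,
            Av K 6 1 * Av K 6 4 * Bv K 6 1 * Bv K 6 4] :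
          MvPolynomial (Fin 10) K →ₐ[K] MvPolynomial (Fin 6 ⊕ Fin 6) K) =
      Ideal.span {X 2 * X 5 - X 1 * X 7, X 3 * X 4 - X 0 * X 8,
        X 6 * X 9 - X 7 * X 8} := by
  have hgen : ({Av K 6 2 * Bv K 6 2, Av K 6 5 * Bv K 6 5,
      Av K 6 0 * Av K 6 4 * Bv K 6 5, Av K 6 1 * Av K 6 3 * Bv K 6 2,
      Av K 6 2 * Bv K 6 1 * Bv K 6 3, Av K 6 5 * Bv K 6 0 * Bv K 6 4,
      Av K 6 0 * Av K 6 3 * Bv K 6 0 * Bv K 6 3, Av K 6 0 * Av K 6 4 * Bv K 6 0 * Bv K 6 4,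
      Av K 6 1 * Av K 6 3 * Bv K 6 1 * Bv K 6 3, Av K 6 1 * Av K 6 4 * Bv K 6 1 * Bv K 6 4} :
      Set (MvPolynomial (Fin 6 ⊕ Fin 6) K)) = Set.range (generator K) := by
    simp only [generator, Matrix.range_cons, Matrix.range_empty, Set.union_empty,
      Set.singleton_union]
  have hrel := relationIdeal_le_ker K
  rw [generator_eq_monomial] at hgen hrel
  refine ⟨?_, ?_⟩
  · rw [hgen, coe_adjoin_range_monomial, range_linearCombination_generatorExponent,
      controlSpan_eq_span_image]
    rfl
  · change RingHom.ker (aeval (generator K)) = relationIdeal K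
    rw [generator_eq_monomial]
    exact ker_aeval_monomials_eq generatorExponent (relationIdeal K) hrel
      injOn_linearCombination_generatorExponent
      (exists_isStandardExponent_sub_mem_relationIdeal K)
end

section
/- Let K be a field and S = K[A_1,…,A_7,B_1,…,B_7]. Let S(Θ) be the K-span of the monomials A_1^{u_1}⋯A_7^{u_7}B_1^{v_1}⋯B_7^{v_7} satisfying u_1+u_2 = v_3+v_4, u_2+u_3 = v_2+v_3, u_3+u_4 = v_1+v_2, u_4+u_5 = v_6+v_7, u_5+u_6 = v_5+v_6, u_6+u_7 = v_4+v_5. Let φ be the K-algebra homomorphism from the polynomial ring in 11 variables onto S(Θ) sending the variables to X_1 = A_2B_3, X_2 = A_3B_2, X_3 = A_5B_6, X_4 = A_6B_5, Y_1 = A_1A_7B_4, Y_2 = A_4B_1B_7, Z_1 = A_1A_3B_1B_3, Z_2 = A_5A_7B_5B_7, W_1 = A_1A_4A_6B_1B_4B_6, W_2 = A_2A_4A_6B_2B_4B_6, W_3 = A_2A_4A_7B_2B_4B_7. Then the kernel ideal of φ cannot be generated by fewer than 5 elements; in particular S(Θ) is not a complete intersection. -/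
/-!
The kernel `I` of `φ` is homogeneous for the `ℕ¹⁴`-grading by exponents of the images. It
contains five binomials `x^{μ_j} - x^{ν_j}`. Every proper divisor `x^b` of a monomial `x^{μ_j}`
(`b = 0` or a single `Z` or `W`) is the only monomial of its multidegree, so its coefficient
vanishes on `I`; hence for `q ∈ I` the `μ_j`-coefficient of `r * q` is `r(0)` times that of `q`.
The map `q ↦ (coeff_{μ_j} q)_j` therefore sends `I = (G)` into the `K`-span of the images of `G`,
while it sends the five binomials onto the standard basis of `K⁵`; so `|G| ≥ 5`.
-/

open MvPolynomial

section MinimalGenerators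

variable {K A V : Type*} [Field K] [CommRing A] [Algebra K A] [AddCommGroup V] [Module K V]

theorem Ideal.map_mem_span_image_of_mem_span {G : Set A} (T : A →ₗ[K] V) (c : A → K)
    (hT : ∀ r, ∀ q ∈ Ideal.span G, T (r * q) = c r • T q) {q : A}
    (hq : q ∈ Ideal.span G) : T q ∈ Submodule.span K (T '' G) := by
  induction hq using Submodule.span_induction with
  | mem x hx => exact Submodule.subset_span ⟨x, hx, rfl⟩
  | zero => simp
  | add x y _ _ hx hy => simpa using add_mem hx hy
  | smul r x hx ih => simpa [hT r x hx] using Submodule.smul_mem _ (c r) ih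

theorem Ideal.finrank_le_card_of_surjOn (G : Finset A) (T : A →ₗ[K] V) (c : A → K)
    (hT : ∀ r, ∀ q ∈ Ideal.span (G : Set A), T (r * q) = c r • T q)
    (hsurj : Set.SurjOn T (Ideal.span (G : Set A)) Set.univ) :
    Module.finrank K V ≤ G.card := by
  classical
  have htop : Submodule.span K ((G.image T : Finset V) : Set V) = ⊤ := by
    refine eq_top_iff.mpr fun v _ => ?_
    obtain ⟨q, hq, rfl⟩ := hsurj (Set.mem_univ v)
    simpa using map_mem_span_image_of_mem_span T c hT hq
  calc Module.finrank K V = Set.finrank K ((G.image T : Finset V) : Set V) := by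
        rw [Set.finrank, htop, finrank_top]
    _ ≤ (G.image T).card := finrank_span_finset_le_card _
    _ ≤ G.card := Finset.card_image_le

end MinimalGenerators

theorem Finsupp.degree_strictMono {σ : Type*} : StrictMono (degree (σ := σ) (R := ℕ)) := by
  intro b μ h
  obtain ⟨c, rfl⟩ := exists_add_of_le h.le
  have hc : c ≠ 0 := by
    rintro rfl
    simp at h
  rw [map_add]
  exact Nat.lt_add_of_pos_right (Nat.pos_of_ne_zero ((degree_eq_zero_iff c).not.mpr hc))

namespace MvPolynomial

variable {R σ ι : Type*}

section CommSemiring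
variable [CommSemiring R] {f : ι → MvPolynomial σ R} {e : ι → σ →₀ ℕ}

theorem aeval_monomial_of_eq_monomial (hf : ∀ i, f i = monomial (e i) 1) (d : ι →₀ ℕ)
    (c : R) : aeval f (monomial d c) = monomial (Finsupp.linearCombination ℕ e d) c := by
  rw [aeval_monomial, Finsupp.linearCombination_apply, monomial_finsupp_sum_index, algebraMap_eq]
  simp only [hf, monomial_pow, one_pow]

theorem coeff_eq_zero_of_aeval_eq_zero (hf : ∀ i, f i = monomial (e i) 1)
    {q : MvPolynomial ι R} (hq : aeval f q = 0) {ν : ι →₀ ℕ}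
    (hν : ∀ d,
      Finsupp.linearCombination ℕ e d = Finsupp.linearCombination ℕ e ν → d = ν) :
    coeff ν q = 0 := by
  classical
  have hsum : aeval f q =
      ∑ d ∈ q.support, monomial (Finsupp.linearCombination ℕ e d) (coeff d q) := by
    conv_lhs => rw [q.as_sum, map_sum]
    exact Finset.sum_congr rfl fun d _ => aeval_monomial_of_eq_monomial hf d _
  have := congrArg (coeff (Finsupp.linearCombination ℕ e ν)) (hsum.symm.trans hq)
  rw [coeff_zero, coeff_sum, Finset.sum_eq_single ν] at this
  · simpa using this
  · intro d _ hd
    rw [coeff_monomial, if_neg fun h => hd (hν d h)]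
  · intro hν'
    rw [notMem_support_iff.mp hν', monomial_zero, coeff_zero]

theorem coeff_mul_eq_coeff_zero_mul {μ : ι →₀ ℕ} {q : MvPolynomial ι R}
    (hq : ∀ b < μ, coeff b q = 0) (r : MvPolynomial ι R) :
    coeff μ (r * q) = coeff 0 r * coeff μ q := by
  classical
  rw [coeff_mul, Finset.sum_eq_single_of_mem (0, μ) (by simp)]
  rintro ⟨a, b⟩ hab hne
  rw [Finset.HasAntidiagonal.mem_antidiagonal] at hab
  have hb : b < μ := by
    refine lt_of_le_of_ne (hab ▸ le_add_self) fun hbμ => hne ?_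
    subst hbμ
    simpa using hab
  simp [hq b hb]

end CommSemiring

theorem le_card_of_coeff_eq_ite {K : Type*} [Field K] {k : ℕ}
    (G : Finset (MvPolynomial ι K)) (μ : Fin k → ι →₀ ℕ)
    (hμ : ∀ j, ∀ q ∈ Ideal.span (G : Set (MvPolynomial ι K)), ∀ b < μ j, coeff b q = 0)
    (p : Fin k → MvPolynomial ι K) (hp : ∀ j, p j ∈ Ideal.span (G : Set (MvPolynomial ι K)))
    (hpμ : ∀ i j, coeff (μ i) (p j) = if i = j then 1 else 0) :
    k ≤ G.card := by
  let T : MvPolynomial ι K →ₗ[K] Fin k → K := LinearMap.pi fun j => lcoeff K (μ j)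
  have hTp : ∀ j, T (p j) = Pi.single j (1 : K) := by
    intro j
    ext i
    simp [T, hpμ, Pi.single_apply]
  have hsurj : Set.SurjOn T (Ideal.span (G : Set (MvPolynomial ι K))) Set.univ := fun v _ =>
    ⟨∑ j, v j • p j, Submodule.sum_mem _ fun j _ => Submodule.smul_of_tower_mem _ _ (hp j),
      by simpa [map_sum, hTp] using (pi_eq_sum_univ' v).symm⟩
  simpa using Ideal.finrank_le_card_of_surjOn G T (coeff 0)
    (fun r q hq => by ext j; simpa [T] using coeff_mul_eq_coeff_zero_mul (hμ j q hq) r) hsurj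

end MvPolynomial

namespace Theta7

/-- Row `i` lists the exponents of `A_1, …, A_7` (resp. `B_1, …, B_7`) in `gen K i`. -/
def genExpA : Fin 11 → Fin 7 → ℕ :=
  ![![0, 1, 0, 0, 0, 0, 0], ![0, 0, 1, 0, 0, 0, 0], ![0, 0, 0, 0, 1, 0, 0],
    ![0, 0, 0, 0, 0, 1, 0], ![1, 0, 0, 0, 0, 0, 1], ![0, 0, 0, 1, 0, 0, 0],
    ![1, 0, 1, 0, 0, 0, 0], ![0, 0, 0, 0, 1, 0, 1], ![1, 0, 0, 1, 0, 1, 0],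
    ![0, 1, 0, 1, 0, 1, 0], ![0, 1, 0, 1, 0, 0, 1]]

def genExpB : Fin 11 → Fin 7 → ℕ :=
  ![![0, 0, 1, 0, 0, 0, 0], ![0, 1, 0, 0, 0, 0, 0], ![0, 0, 0, 0, 0, 1, 0],
    ![0, 0, 0, 0, 1, 0, 0], ![0, 0, 0, 1, 0, 0, 0], ![1, 0, 0, 0, 0, 0, 1],
    ![1, 0, 1, 0, 0, 0, 0], ![0, 0, 0, 0, 1, 0, 1], ![1, 0, 0, 1, 0, 1, 0],
    ![0, 1, 0, 1, 0, 1, 0], ![0, 1, 0, 1, 0, 0, 1]]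

noncomputable def genExp (i : Fin 11) : Fin 7 ⊕ Fin 7 →₀ ℕ :=
  Finsupp.equivFunOnFinite.symm (Sum.elim (genExpA i) (genExpB i))

noncomputable def gen (K : Type*) [Field K] : Fin 11 → MvPolynomial (Fin 7 ⊕ Fin 7) K :=
  ![Av K 7 1 * Bv K 7 2, Av K 7 2 * Bv K 7 1,
    Av K 7 4 * Bv K 7 5, Av K 7 5 * Bv K 7 4,
    Av K 7 0 * Av K 7 6 * Bv K 7 3, Av K 7 3 * Bv K 7 0 * Bv K 7 6,
    Av K 7 0 * Av K 7 2 * Bv K 7 0 * Bv K 7 2,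
    Av K 7 4 * Av K 7 6 * Bv K 7 4 * Bv K 7 6,
    Av K 7 0 * Av K 7 3 * Av K 7 5 * Bv K 7 0 * Bv K 7 3 * Bv K 7 5,
    Av K 7 1 * Av K 7 3 * Av K 7 5 * Bv K 7 1 * Bv K 7 3 * Bv K 7 5,
    Av K 7 1 * Av K 7 3 * Av K 7 6 * Bv K 7 1 * Bv K 7 3 * Bv K 7 6]

theorem gen_eq_monomial (K : Type*) [Field K] (i : Fin 11) : gen K i = monomial (genExp i) 1 := by
  fin_cases i <;> simp only [gen, Av, Bv, X, monomial_mul, one_mul] <;>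
    refine congrArg (monomial · 1) (Finsupp.ext ?_) <;>
    rintro (s | s) <;> fin_cases s <;> simp [genExp, genExpA, genExpB]

/-- Exponents over `X_1, …, X_4, Y_1, Y_2, Z_1, Z_2, W_1, W_2, W_3` of the binomials
`Z₁W₂ - X₁X₂W₁`, `Z₁W₃ - X₁X₂Y₁Y₂`, `Z₂W₁ - X₃X₄Y₁Y₂`, `Z₂W₂ - X₃X₄W₃`, `W₁W₃ - Y₁Y₂W₂`. -/
def muTab : Fin 5 → Fin 11 → ℕ :=
  ![![0, 0, 0, 0, 0, 0, 1, 0, 0, 1, 0], ![0, 0, 0, 0, 0, 0, 1, 0, 0, 0, 1],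
    ![0, 0, 0, 0, 0, 0, 0, 1, 1, 0, 0], ![0, 0, 0, 0, 0, 0, 0, 1, 0, 1, 0],
    ![0, 0, 0, 0, 0, 0, 0, 0, 1, 0, 1]]

def nuTab : Fin 5 → Fin 11 → ℕ :=
  ![![1, 1, 0, 0, 0, 0, 0, 0, 1, 0, 0], ![1, 1, 0, 0, 1, 1, 0, 0, 0, 0, 0],
    ![0, 0, 1, 1, 1, 1, 0, 0, 0, 0, 0], ![0, 0, 1, 1, 0, 0, 0, 0, 0, 0, 1],
    ![0, 0, 0, 0, 1, 1, 0, 0, 0, 1, 0]]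

noncomputable def mu (j : Fin 5) : Fin 11 →₀ ℕ := Finsupp.equivFunOnFinite.symm (muTab j)
noncomputable def nu (j : Fin 5) : Fin 11 →₀ ℕ := Finsupp.equivFunOnFinite.symm (nuTab j)

theorem linearCombination_genExp_apply (d : Fin 11 →₀ ℕ) (s : Fin 7 ⊕ Fin 7) :
    Finsupp.linearCombination ℕ genExp d s = ∑ i, d i * Sum.elim (genExpA i) (genExpB i) s := by
  rw [Finsupp.linearCombination_apply, Finsupp.sum_fintype _ _ (by simp), Finset.sum_apply']
  simp [genExp]

theorem linearCombination_mu (j : Fin 5) :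
    Finsupp.linearCombination ℕ genExp (mu j) = Finsupp.linearCombination ℕ genExp (nu j) := by
  ext s
  simp only [linearCombination_genExp_apply, mu, nu, Finsupp.coe_equivFunOnFinite_symm]
  revert j s
  decide

theorem mu_ne_nu (i j : Fin 5) : mu i ≠ nu j := by
  rw [mu, nu, Ne, Equiv.apply_eq_iff_eq]
  revert i j
  decide

theorem mu_injective : Function.Injective mu := by
  intro i j h
  rw [mu, mu, Equiv.apply_eq_iff_eq] at h
  revert i j
  decide

theorem eq_zero_and_degree_le_one_of_lt_mu {j : Fin 5} {b : Fin 11 →₀ ℕ} (hb : b < mu j) :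
    (∀ i : Fin 11, (i : ℕ) < 6 → b i = 0) ∧ b.degree ≤ 1 := by
  have hzero : ∀ j (i : Fin 11), (i : ℕ) < 6 → muTab j i = 0 := by decide
  have hdeg : ∀ j, (mu j).degree = 2 := by
    intro j
    simp only [Finsupp.degree_eq_sum, mu, Finsupp.coe_equivFunOnFinite_symm]
    revert j
    decide
  refine ⟨fun i hi => Nat.eq_zero_of_le_zero ((hb.le i).trans_eq (hzero j i hi)), ?_⟩
  have := Finsupp.degree_strictMono hb
  rw [hdeg] at this
  omega

theorem eq_of_linearCombination_genExp_eq {b d : Fin 11 →₀ ℕ}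
    (hb : ∀ i : Fin 11, (i : ℕ) < 6 → b i = 0) (hdeg : b.degree ≤ 1)
    (h : Finsupp.linearCombination ℕ genExp d = Finsupp.linearCombination ℕ genExp b) :
    d = b := by
  have hs : ∀ s, ∑ i, d i * Sum.elim (genExpA i) (genExpB i) s
      = ∑ i, b i * Sum.elim (genExpA i) (genExpB i) s := fun s => by
    simpa only [linearCombination_genExp_apply] using DFunLike.congr_fun h s
  simp only [Sum.forall, Fin.forall_fin_succ, Fin.sum_univ_succ] at hs hb
  rw [Finsupp.degree_eq_sum, Fin.sum_univ_succ] at hdeg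
  simp [Fin.sum_univ_succ, genExpA, genExpB] at hs hb hdeg
  ext i
  fin_cases i <;> simp only [Fin.zero_eta, Fin.mk_one, Fin.reduceFinMk] <;> omega

variable {K : Type*} [Field K]

theorem coeff_eq_zero_of_lt_mu {q : MvPolynomial (Fin 11) K} (hq : aeval (gen K) q = 0)
    {j : Fin 5} {b : Fin 11 →₀ ℕ} (hb : b < mu j) : coeff b q = 0 :=
  have ⟨hb₀, hdeg⟩ := eq_zero_and_degree_le_one_of_lt_mu hb
  coeff_eq_zero_of_aeval_eq_zero (gen_eq_monomial K) hq
    fun _ hd => eq_of_linearCombination_genExp_eq hb₀ hdeg hd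

theorem aeval_binomial (j : Fin 5) :
    aeval (gen K) (monomial (mu j) (1 : K) - monomial (nu j) 1) = 0 := by
  rw [map_sub, aeval_monomial_of_eq_monomial (gen_eq_monomial K),
    aeval_monomial_of_eq_monomial (gen_eq_monomial K), linearCombination_mu, sub_self]

theorem coeff_mu_binomial (i j : Fin 5) :
    coeff (mu i) (monomial (mu j) (1 : K) - monomial (nu j) 1) = if i = j then 1 else 0 := by
  simp [coeff_monomial, mu_ne_nu, mu_injective.eq_iff, eq_comm]

end Theta7

/-- For `n = 7` and the matching `Θ(x_1)=y_3, Θ(x_2)=y_2, Θ(x_3)=y_1, Θ(x_4)=y_6,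
Θ(x_5)=y_5, Θ(x_6)=y_4`, let `φ` be the presentation of `S(Θ)` on the eleven
generators `X_1, X_2, X_3, X_4, Y_1, Y_2, Z_1, Z_2, W_1, W_2, W_3` (in this order).
Then the kernel of `φ` cannot be generated by fewer than 5 elements; in particular
`S(Θ)` is not a complete intersection. -/
theorem stmt19 (K : Type*) [Field K]
    (G : Finset (MvPolynomial (Fin 11) K))
    (hG : Ideal.span (G : Set (MvPolynomial (Fin 11) K)) =
      RingHom.ker
        (aeval (R := K)
          ![Av K 7 1 * Bv K 7 2, Av K 7 2 * Bv K 7 1,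
            Av K 7 4 * Bv K 7 5, Av K 7 5 * Bv K 7 4,
            Av K 7 0 * Av K 7 6 * Bv K 7 3, Av K 7 3 * Bv K 7 0 * Bv K 7 6,
            Av K 7 0 * Av K 7 2 * Bv K 7 0 * Bv K 7 2,
            Av K 7 4 * Av K 7 6 * Bv K 7 4 * Bv K 7 6,
            Av K 7 0 * Av K 7 3 * Av K 7 5 * Bv K 7 0 * Bv K 7 3 * Bv K 7 5,
            Av K 7 1 * Av K 7 3 * Av K 7 5 * Bv K 7 1 * Bv K 7 3 * Bv K 7 5,
            Av K 7 1 * Av K 7 3 * Av K 7 6 * Bv K 7 1 * Bv K 7 3 * Bv K 7 6] :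
          MvPolynomial (Fin 11) K →ₐ[K] MvPolynomial (Fin 7 ⊕ Fin 7) K)) :
    5 ≤ G.card := by
  have hI : ∀ q, q ∈ Ideal.span (G : Set (MvPolynomial (Fin 11) K)) ↔
      aeval (Theta7.gen K) q = 0 := fun q => by rw [hG, RingHom.mem_ker]; rfl
  exact le_card_of_coeff_eq_ite G Theta7.mu
    (fun _ q hq _ hb => Theta7.coeff_eq_zero_of_lt_mu ((hI q).mp hq) hb)
    (fun j => monomial (Theta7.mu j) 1 - monomial (Theta7.nu j) 1)
    (fun j => (hI _).mpr (Theta7.aeval_binomial j)) Theta7.coeff_mu_binomial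
end
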